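/- Let F₁ and F₂ be U-statistics of orders k₁ ≥ k₂ driven by symmetric functions f₁, f₂ respectively. Then the pointwise product satisfies F₁(μ)F₂(μ) = ∑_{j=0}^{k₂} C(k₂,j) · k₁!/(k₁−k₂+j)! · ∑_{(x₁,…,x_{k₁+j}) ∈ μ^{k₁+j}_≠} f₂(x₁,…,x_{k₂}) f₁(x₁,…,x_{k₂−j}, x_{k₂+1},…,x_{k₁+j}) for every finite point configuration μ. -/

import Mathlib

/-- The set `μ^k_≠` of `k`-tuples of pairwise distinct points of a configuration `μ`. -/
def distinctTuples {B : Type*} [DecidableEq B] (k : ℕ) (x : Finset B) :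
    Finset (Fin k → B) :=
  (Fintype.piFinset fun _ : Fin k => x).filter Function.Injective

/-- The `U`-statistic of order `k` driven by `f`. -/
def Ustat {B : Type*} [DecidableEq B] (k : ℕ) (f : (Fin k → B) → ℝ) (x : Finset B) : ℝ :=
  ∑ t ∈ distinctTuples k x, f t

/-!
Expanding the product gives a sum over pairs `(s, u)` of tuples of distinct points, which we
group by the number `k₁ + j` of points the pair spans. Such a pair comes from a tuple
`t ∈ μ^{k₁+j}_≠` read along the two index maps of the statement, up to reordering `s` and `u`;
by symmetry of `f₁` and `f₂` only the images of `s` and `u` matter. Double counting the pairs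
`(t, (s, u))` with matching images gives the factor `k₁! k₂!` on one side and
`(k₂ - j)! j! (k₁ - k₂ + j)!` on the other: `t` must map each cell of the Venn diagram of the two
index sets bijectively onto the corresponding cell of the Venn diagram of the images of `s`, `u`.
-/

open Finset Function
open scoped Nat

section

variable {B : Type*} [DecidableEq B]

theorem card_filter_injective_piFinset {ι κ : Type*} [Fintype ι] [DecidableEq ι] [Fintype κ]
    [DecidableEq κ] (blk : ι → κ) (A : κ → Finset B) (hA : Pairwise (Disjoint on A)) :
    #{t ∈ Fintype.piFinset (fun p => A (blk p)) | Injective t} =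
      ∏ k, (#(A k)).descFactorial #{p | blk p = k} := by
  calc _ = Fintype.card (∀ k, {p // blk p = k} ↪ A k) := by
        refine card_eq_of_equiv_fintype
          { toFun := fun t k => ⟨fun p => ⟨t.1 p, ?_⟩, ?_⟩
            invFun := fun e => ⟨fun p => e (blk p) ⟨p, rfl⟩, ?_⟩
            left_inv := fun t => rfl
            right_inv := fun e => ?_ }
        · obtain ⟨p, rfl⟩ := p
          exact Fintype.mem_piFinset.mp (mem_filter.mp t.2).1 p
        · exact fun p q h => Subtype.ext ((mem_filter.mp t.2).2 congr(($h : B)))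
        · refine mem_filter.mpr ⟨Fintype.mem_piFinset.mpr fun p => (e _ _).2, fun p q h => ?_⟩
          have key : ∀ k k' (hp : blk p = k) (hq : blk q = k'),
              (e k ⟨p, hp⟩ : B) = e k' ⟨q, hq⟩ → p = q := by
            rintro k k' hp hq h
            obtain rfl : k = k' := by
              by_contra hne
              exact Finset.disjoint_left.mp (hA hne) (e k ⟨p, hp⟩).2 (h.symm ▸ (e k' ⟨q, hq⟩).2)
            exact congrArg Subtype.val ((e k).injective (Subtype.ext h))
          exact key _ _ rfl rfl h
        · funext k
          ext ⟨p, rfl⟩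
          rfl
    _ = _ := by simp [Fintype.card_pi, Fintype.card_embedding_eq, Fintype.card_subtype]

theorem mem_distinctTuples {k : ℕ} {x : Finset B} {t : Fin k → B} :
    t ∈ distinctTuples k x ↔ (∀ i, t i ∈ x) ∧ Injective t := by
  simp [distinctTuples]

theorem card_distinctTuples (k : ℕ) (x : Finset B) :
    #(distinctTuples k x) = (#x).descFactorial k := by
  simpa [distinctTuples] using card_filter_injective_piFinset (fun _ : Fin k => ()) (fun _ => x)
    (Subsingleton.pairwise)

theorem card_image_univ_of_mem_distinctTuples {k : ℕ} {x : Finset B} {t : Fin k → B}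
    (ht : t ∈ distinctTuples k x) : #(univ.image t) = k := by
  rw [card_image_of_injective _ (mem_distinctTuples.mp ht).2, card_univ, Fintype.card_fin]

theorem image_eq_iff_forall_mem_iff {α : Type*} [DecidableEq α] {t : α → B} (ht : Injective t)
    {I : Finset α} {S : Finset B} (hcard : #S = #I) :
    I.image t = S ↔ ∀ p, t p ∈ S ↔ p ∈ I := by
  refine ⟨fun h p => h ▸ ht.mem_finset_image, fun h => ?_⟩
  refine eq_of_subset_of_card_le (image_subset_iff.mpr fun p hp => (h p).mpr hp) ?_
  rw [card_image_of_injective _ ht, hcard]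

theorem filter_image_eq_distinctTuples {k : ℕ} {x S : Finset B} (hS : S ⊆ x) (hcard : #S = k) :
    {t ∈ distinctTuples k x | univ.image t = S} = distinctTuples k S := by
  ext t
  simp only [mem_filter, mem_distinctTuples]
  constructor
  · rintro ⟨⟨-, ht⟩, rfl⟩
    exact ⟨fun i => mem_image_of_mem t (mem_univ i), ht⟩
  · rintro ⟨htS, ht⟩
    refine ⟨⟨fun i => hS (htS i), ht⟩, ?_⟩
    rw [image_eq_iff_forall_mem_iff ht (by simpa using hcard)]
    simpa using htS

theorem card_filter_image_eq {k : ℕ} {x S : Finset B} (hS : S ⊆ x) (hcard : #S = k) :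
    #{t ∈ distinctTuples k x | univ.image t = S} = k ! := by
  rw [filter_image_eq_distinctTuples hS hcard, card_distinctTuples, hcard, Nat.descFactorial_self]

theorem apply_eq_of_image_eq {k : ℕ} {f : (Fin k → B) → ℝ}
    (hf : ∀ (σ : Equiv.Perm (Fin k)) (t : Fin k → B), f (t ∘ σ) = f t) {s t : Fin k → B}
    (hs : Injective s) (ht : Injective t) (h : univ.image s = univ.image t) : f s = f t := by
  have hr : Set.range s = Set.range t := by simpa using congrArg (fun S : Finset B => (S : Set B)) h
  have : s ∘ ((Equiv.ofInjective t ht).trans ((Equiv.setCongr hr.symm).trans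
      (Equiv.ofInjective s hs).symm)) = t := by
    funext i
    simp [Equiv.apply_ofInjective_symm hs]
  rw [← this, hf]

section vennCell

variable {α : Type*} [DecidableEq α] {X Y Z : Finset α}

def vennCell (X Y : Finset α) (x : α) : Bool × Bool := (decide (x ∈ X), decide (x ∈ Y))

theorem filter_vennCell_true_true (hX : X ⊆ Z) :
    {x ∈ Z | vennCell X Y x = (true, true)} = X ∩ Y := by
  ext x; simpa [vennCell] using fun h _ => hX h

theorem filter_vennCell_true_false (hX : X ⊆ Z) :
    {x ∈ Z | vennCell X Y x = (true, false)} = X \ Y := by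
  ext x; simpa [vennCell] using fun h _ => hX h

theorem filter_vennCell_false_true (hY : Y ⊆ Z) :
    {x ∈ Z | vennCell X Y x = (false, true)} = Y \ X := by
  ext x; simpa [vennCell, and_comm] using fun _ h => hY h

theorem filter_vennCell_false_false :
    {x ∈ Z | vennCell X Y x = (false, false)} = Z \ (X ∪ Y) := by
  ext x; simp [vennCell]

end vennCell

theorem card_filter_image_eq_and_image_eq {n : ℕ} {I C : Finset (Fin n)} (hIC : I ∪ C = univ)
    {μ S U : Finset B} (hS : S ⊆ μ) (hU : U ⊆ μ) (hSI : #S = #I) (hUC : #U = #C)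
    (hSU : #(S ∪ U) = n) :
    #{t ∈ distinctTuples n μ | S = I.image t ∧ U = C.image t} =
      (#I + #C - n)! * (n - #C)! * (n - #I)! := by
  have hcells : {t ∈ distinctTuples n μ | S = I.image t ∧ U = C.image t} =
      {t ∈ Fintype.piFinset (fun p => {x ∈ μ | vennCell S U x = vennCell I C p}) |
        Injective t} := by
    ext t
    simp only [mem_filter, mem_distinctTuples, Fintype.mem_piFinset, vennCell, Prod.mk.injEq,
      decide_eq_decide]
    constructor
    · rintro ⟨⟨-, ht⟩, hI, hC⟩
      rw [eq_comm, image_eq_iff_forall_mem_iff ht hSI] at hI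
      rw [eq_comm, image_eq_iff_forall_mem_iff ht hUC] at hC
      refine ⟨fun p => ⟨?_, hI p, hC p⟩, ht⟩
      rcases mem_union.mp (hIC ▸ mem_univ p) with hp | hp
      exacts [hS ((hI p).mpr hp), hU ((hC p).mpr hp)]
    · rintro ⟨h, ht⟩
      exact ⟨⟨fun p => (h p).1, ht⟩,
        ((image_eq_iff_forall_mem_iff ht hSI).mpr fun p => (h p).2.1).symm,
        ((image_eq_iff_forall_mem_iff ht hUC).mpr fun p => (h p).2.2).symm⟩
  have hdisj : Pairwise (Disjoint on fun k => {x ∈ μ | vennCell S U x = k}) :=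
    fun k k' hne => disjoint_filter.mpr fun x _ h h' => hne (h ▸ h')
  have hn : #(I ∪ C) = n := by rw [hIC, card_univ, Fintype.card_fin]
  have hSU₀ := card_union_add_card_inter S U
  have hIC₀ := card_union_add_card_inter I C
  have hSU₁ := card_sdiff_add_card S U
  have hSU₂ := card_sdiff_add_card U S
  have hIC₁ := card_sdiff_add_card I C
  have hIC₂ := card_sdiff_add_card C I
  rw [union_comm] at hSU₂ hIC₂
  -- The cell `(false, false)` of `I, C` is empty; the other cells of `I, C` and `S, U` match.
  rw [hcells, card_filter_injective_piFinset _ _ hdisj, Fintype.prod_prod_type,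
    Fintype.prod_bool, Fintype.prod_bool, Fintype.prod_bool, filter_vennCell_true_true hS,
    filter_vennCell_true_false hS, filter_vennCell_false_true hU,
    filter_vennCell_true_true (subset_univ I), filter_vennCell_true_false (subset_univ I),
    filter_vennCell_false_true (subset_univ C), filter_vennCell_false_false,
    filter_vennCell_false_false, hIC, sdiff_self, bot_eq_empty, card_empty,
    Nat.descFactorial_zero, mul_one, show #(S ∩ U) = #I + #C - n by omega,
    show #(I ∩ C) = #I + #C - n by omega,
    show #(S \ U) = n - #C by omega, show #(I \ C) = n - #C by omega,
    show #(U \ S) = n - #I by omega, show #(C \ I) = n - #I by omega]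
  simp only [Nat.descFactorial_self]

theorem factorial_mul_sum_spanning_pairs {k₁ k₂ n : ℕ} {e₁ : Fin k₁ → Fin n} {e₂ : Fin k₂ → Fin n}
    (he₁ : Injective e₁) (he₂ : Injective e₂) (hcover : univ.image e₁ ∪ univ.image e₂ = univ)
    {f₁ : (Fin k₁ → B) → ℝ} (hf₁ : ∀ (σ : Equiv.Perm (Fin k₁)) (t : Fin k₁ → B), f₁ (t ∘ σ) = f₁ t)
    {f₂ : (Fin k₂ → B) → ℝ} (hf₂ : ∀ (σ : Equiv.Perm (Fin k₂)) (t : Fin k₂ → B), f₂ (t ∘ σ) = f₂ t)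
    (μ : Finset B) :
    ((k₁ + k₂ - n)! * (n - k₂)! * (n - k₁)! : ℝ) *
        ∑ p ∈ distinctTuples k₁ μ ×ˢ distinctTuples k₂ μ with
          #(univ.image p.1 ∪ univ.image p.2) = n, f₁ p.1 * f₂ p.2 =
      (k₁ ! * k₂ ! : ℝ) * ∑ t ∈ distinctTuples n μ, f₂ (t ∘ e₂) * f₁ (t ∘ e₁) := by
  set I := univ.image e₁
  set C := univ.image e₂
  have hI : #I = k₁ := by rw [card_image_of_injective _ he₁, card_univ, Fintype.card_fin]
  have hC : #C = k₂ := by rw [card_image_of_injective _ he₂, card_univ, Fintype.card_fin]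
  set R : (Fin n → B) → (Fin k₁ → B) × (Fin k₂ → B) → Prop :=
    fun t p => univ.image p.1 = I.image t ∧ univ.image p.2 = C.image t
  have hspan : ∀ t ∈ distinctTuples n μ, #(I.image t ∪ C.image t) = n := fun t ht => by
    rw [← image_union, hcover, card_image_univ_of_mem_distinctTuples ht]
  have hdouble := sum_comm' (s := distinctTuples n μ)
    (t := fun t => {p ∈ distinctTuples k₁ μ ×ˢ distinctTuples k₂ μ | R t p})
    (s' := fun p => {t ∈ distinctTuples n μ | R t p})
    (t' := {p ∈ distinctTuples k₁ μ ×ˢ distinctTuples k₂ μ |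
      #(univ.image p.1 ∪ univ.image p.2) = n})
    (f := fun _ p => f₁ p.1 * f₂ p.2) (by
      rintro t ⟨s, u⟩
      simp only [mem_filter, R]
      constructor
      · rintro ⟨ht, hp, hs, hu⟩
        exact ⟨⟨ht, hs, hu⟩, hp, hs ▸ hu ▸ hspan t ht⟩
      · rintro ⟨⟨ht, hs, hu⟩, hp, -⟩
        exact ⟨ht, hp, hs, hu⟩)
  have hleft : ∀ t ∈ distinctTuples n μ,
      ∑ p ∈ distinctTuples k₁ μ ×ˢ distinctTuples k₂ μ with R t p, f₁ p.1 * f₂ p.2 =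
        (k₁ ! * k₂ ! : ℝ) * (f₂ (t ∘ e₂) * f₁ (t ∘ e₁)) := by
    intro t ht
    have hsub : ∀ J : Finset (Fin n), J.image t ⊆ μ := fun J =>
      image_subset_iff.mpr fun p _ => (mem_distinctTuples.mp ht).1 p
    have hcard : ∀ J : Finset (Fin n), #(J.image t) = #J := fun J =>
      card_image_of_injective _ (mem_distinctTuples.mp ht).2
    have hconst : ∀ p ∈ {q ∈ distinctTuples k₁ μ ×ˢ distinctTuples k₂ μ | R t q},
        f₁ p.1 * f₂ p.2 = f₂ (t ∘ e₂) * f₁ (t ∘ e₁) := by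
      intro p hp
      obtain ⟨hp, h₁, h₂⟩ := mem_filter.mp hp
      obtain ⟨hs, hu⟩ := mem_product.mp hp
      rw [image_image] at h₁ h₂
      rw [apply_eq_of_image_eq hf₁ (mem_distinctTuples.mp hs).2
        ((mem_distinctTuples.mp ht).2.comp he₁) h₁, apply_eq_of_image_eq hf₂
        (mem_distinctTuples.mp hu).2 ((mem_distinctTuples.mp ht).2.comp he₂) h₂, mul_comm]
    rw [sum_congr rfl hconst, sum_const, nsmul_eq_mul, filter_product
      (fun s => univ.image s = I.image t) (fun u => univ.image u = C.image t), card_product,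
      card_filter_image_eq (hsub I) ((hcard I).trans hI),
      card_filter_image_eq (hsub C) ((hcard C).trans hC)]
    push_cast; ring
  have hright : ∀ p ∈ {q ∈ distinctTuples k₁ μ ×ˢ distinctTuples k₂ μ |
      #(univ.image q.1 ∪ univ.image q.2) = n}, ∑ t ∈ distinctTuples n μ with R t p,
        f₁ p.1 * f₂ p.2 = ((k₁ + k₂ - n)! * (n - k₂)! * (n - k₁)! : ℝ) * (f₁ p.1 * f₂ p.2) := by
    intro p hp
    obtain ⟨hp, hspan⟩ := mem_filter.mp hp
    obtain ⟨hs, hu⟩ := mem_product.mp hp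
    have hsub : ∀ {k} (s : Fin k → B), s ∈ distinctTuples k μ → univ.image s ⊆ μ := fun s hs =>
      image_subset_iff.mpr fun i _ => (mem_distinctTuples.mp hs).1 i
    rw [sum_const, nsmul_eq_mul, card_filter_image_eq_and_image_eq hcover (hsub _ hs) (hsub _ hu)
      ((card_image_univ_of_mem_distinctTuples hs).trans hI.symm)
      ((card_image_univ_of_mem_distinctTuples hu).trans hC.symm) hspan, hI, hC]
    push_cast; ring
  rw [sum_congr rfl hleft, sum_congr rfl hright, ← mul_sum, ← mul_sum] at hdouble
  exact hdouble.symm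

theorem sum_product_distinctTuples_eq_sum_range {M : Type*} [AddCommMonoid M] (k₁ k₂ : ℕ)
    (μ : Finset B) (F : (Fin k₁ → B) × (Fin k₂ → B) → M) :
    ∑ p ∈ distinctTuples k₁ μ ×ˢ distinctTuples k₂ μ, F p =
      ∑ j ∈ range (k₂ + 1), ∑ p ∈ distinctTuples k₁ μ ×ˢ distinctTuples k₂ μ with
        #(univ.image p.1 ∪ univ.image p.2) = k₁ + j, F p := by
  have hspan : ∀ p ∈ distinctTuples k₁ μ ×ˢ distinctTuples k₂ μ,
      k₁ ≤ #(univ.image p.1 ∪ univ.image p.2) ∧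
        #(univ.image p.1 ∪ univ.image p.2) ≤ k₁ + k₂ := by
    intro p hp
    obtain ⟨hs, hu⟩ := mem_product.mp hp
    have := card_le_card (subset_union_left (s₁ := univ.image p.1) (s₂ := univ.image p.2))
    have := card_union_le (univ.image p.1) (univ.image p.2)
    rw [card_image_univ_of_mem_distinctTuples hs, card_image_univ_of_mem_distinctTuples hu] at *
    omega
  rw [← sum_fiberwise_of_maps_to (g := fun p => #(univ.image p.1 ∪ univ.image p.2) - k₁)
    (t := range (k₂ + 1)) fun p hp => mem_range.mpr (by have := hspan p hp; omega)]
  refine sum_congr rfl fun j _ => ?_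
  rw [filter_congr (q := fun p => #(univ.image p.1 ∪ univ.image p.2) = k₁ + j)
    fun p hp => by have := hspan p hp; omega]

end

def skipBlock (k₁ k₂ j : ℕ) (i : Fin k₁) : Fin (k₁ + j) :=
  ⟨if (i : ℕ) < k₂ - j then (i : ℕ) else (i : ℕ) + j, by split_ifs <;> omega⟩

theorem skipBlock_injective (k₁ k₂ j : ℕ) : Injective (skipBlock k₁ k₂ j) := by
  intro a b h
  simp only [skipBlock, Fin.mk.injEq] at h
  split_ifs at h <;> omega

theorem image_skipBlock_union_image_castLE {k₁ k₂ j : ℕ} (hj : j ≤ k₂) (h : k₂ ≤ k₁ + j) :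
    univ.image (skipBlock k₁ k₂ j) ∪ univ.image (Fin.castLE h) = univ := by
  refine eq_univ_of_forall fun p => ?_
  simp only [mem_union, mem_image, mem_univ, true_and]
  by_cases hp : (p : ℕ) < k₂
  · exact Or.inr ⟨⟨p, hp⟩, rfl⟩
  · refine Or.inl ⟨⟨p - j, by omega⟩, Fin.ext ?_⟩
    simp only [skipBlock]
    split_ifs <;> omega

/-- Product formula for two `U`-statistics of orders `k₁ ≥ k₂`:
`F₁(μ)F₂(μ) = ∑_{j=0}^{k₂} C(k₂,j)·k₁!/(k₁−k₂+j)! ·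
  ∑_{(x₁,…,x_{k₁+j}) ∈ μ^{k₁+j}_≠} f₂(x₁,…,x_{k₂}) f₁(x₁,…,x_{k₂−j},x_{k₂+1},…,x_{k₁+j})`. -/
theorem Ustat_mul_Ustat {B : Type*} [DecidableEq B] (k₁ k₂ : ℕ) (hk : k₂ ≤ k₁)
    (f₁ : (Fin k₁ → B) → ℝ)
    (hf₁ : ∀ (σ : Equiv.Perm (Fin k₁)) (t : Fin k₁ → B), f₁ (t ∘ σ) = f₁ t)
    (f₂ : (Fin k₂ → B) → ℝ)
    (hf₂ : ∀ (σ : Equiv.Perm (Fin k₂)) (t : Fin k₂ → B), f₂ (t ∘ σ) = f₂ t)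
    (μ : Finset B) :
    Ustat k₁ f₁ μ * Ustat k₂ f₂ μ =
      ∑ j ∈ Finset.range (k₂ + 1),
        (k₂.choose j : ℝ) * ((k₁.factorial : ℝ) / (k₁ - k₂ + j).factorial) *
          ∑ t ∈ distinctTuples (k₁ + j) μ,
            f₂ (fun i => t (Fin.castLE (by omega) i)) *
              f₁ (fun i => t ⟨if (i : ℕ) < k₂ - j then (i : ℕ) else (i : ℕ) + j,
                by have := i.isLt; split_ifs <;> omega⟩) := by
  rw [Ustat, Ustat, sum_mul_sum, ← sum_product', sum_product_distinctTuples_eq_sum_range]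
  refine sum_congr rfl fun j hjr => ?_
  have hj : j ≤ k₂ := Nat.lt_succ_iff.mp (mem_range.mp hjr)
  have hk' : k₂ ≤ k₁ + j := by omega
  have hdouble := factorial_mul_sum_spanning_pairs (skipBlock_injective k₁ k₂ j)
    (Fin.castLE_injective hk') (image_skipBlock_union_image_castLE hj hk') hf₁ hf₂ μ
  rw [show k₁ + k₂ - (k₁ + j) = k₂ - j by omega, show k₁ + j - k₂ = k₁ - k₂ + j by omega,
    Nat.add_sub_cancel_left] at hdouble
  have hcoef : (k₂.choose j : ℝ) * (k₁ ! / (k₁ - k₂ + j)!) =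
      k₁ ! * k₂ ! / ((k₂ - j)! * (k₁ - k₂ + j)! * j !) := by
    rw [← Nat.choose_mul_factorial_mul_factorial hj]
    push_cast
    field_simp
  rw [hcoef, div_mul_eq_mul_div, eq_div_iff (by positivity), mul_comm]
  exact hdouble
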